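/- If {k_i}_{i∈I} is a family of fields, then the Zariski prime spectrum Spec(∏_{i∈I} k_i) is homeomorphic to the Stone–Čech compactification of the discrete space I. -/

import Mathlib

/-!
A prime `p` of `∏ i, k i` is determined by which idempotents it contains. The idempotents are
the indicators `e_A` of subsets `A ⊆ I`, and `{A | e_A ∉ p}` is an ultrafilter: closure under
intersection is primality of `p`, and exactly one of `e_A`, `e_Aᶜ` lies in `p` because they are
orthogonal with sum `1`. Over fields `x` and `e_{supp x}` divide each other, so `p` is the ideal of
functions vanishing along its ultrafilter; conversely every ultrafilter defines such a prime. The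
resulting continuous bijection from the compact spectrum to the Hausdorff space of ultrafilters
is a homeomorphism.
-/

open Filter Set

theorem Ideal.IsPrime.mem_iff_notMem_of_mul_eq_zero_of_add_eq_one {R : Type*} [CommSemiring R]
    {P : Ideal R} (hP : P.IsPrime) {e f : R} (hmul : e * f = 0) (hadd : e + f = 1) :
    f ∈ P ↔ e ∉ P := by
  refine ⟨fun hf he => hP.ne_top ?_, fun he => (hP.mem_or_mem (hmul ▸ P.zero_mem)).resolve_left he⟩
  rw [P.eq_top_iff_one, ← hadd]
  exact P.add_mem he hf

namespace Pi

variable {I : Type*} {R : I → Type*}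

section Idempotent

variable [∀ i, Semiring (R i)]

open Classical in
noncomputable def idempotentOfSet (A : Set I) : ∀ i, R i := fun i => if i ∈ A then 1 else 0

@[simp]
lemma idempotentOfSet_apply_of_mem {A : Set I} {i : I} (h : i ∈ A) :
    idempotentOfSet (R := R) A i = 1 := if_pos h

@[simp]
lemma idempotentOfSet_apply_of_notMem {A : Set I} {i : I} (h : i ∉ A) :
    idempotentOfSet (R := R) A i = 0 := if_neg h

lemma idempotentOfSet_apply_eq_zero_iff [∀ i, Nontrivial (R i)] {A : Set I} {i : I} :
    idempotentOfSet (R := R) A i = 0 ↔ i ∉ A := by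
  by_cases h : i ∈ A <;> simp [h]

lemma idempotentOfSet_univ : idempotentOfSet (R := R) univ = 1 := by
  funext i; simp

lemma idempotentOfSet_inter (A B : Set I) :
    idempotentOfSet (R := R) (A ∩ B) = idempotentOfSet A * idempotentOfSet B := by
  funext i
  by_cases hA : i ∈ A <;> by_cases hB : i ∈ B <;> simp [hA, hB]

lemma idempotentOfSet_mul_compl (A : Set I) :
    idempotentOfSet (R := R) A * idempotentOfSet Aᶜ = 0 := by
  funext i
  by_cases hA : i ∈ A <;> simp [hA]

lemma idempotentOfSet_add_compl (A : Set I) :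
    idempotentOfSet (R := R) A + idempotentOfSet Aᶜ = 1 := by
  funext i
  by_cases hA : i ∈ A <;> simp [hA]

end Idempotent

section EventuallyZero

variable [∀ i, CommSemiring (R i)]

def eventuallyZeroIdeal (F : Filter I) : Ideal (∀ i, R i) where
  carrier := {x | ∀ᶠ i in F, x i = 0}
  zero_mem' := Eventually.of_forall fun _ => rfl
  add_mem' hx hy := (hx.and hy).mono fun i h => by simp [h.1, h.2]
  smul_mem' c _ hx := hx.mono fun i h => by simp [h]

@[simp]
lemma mem_eventuallyZeroIdeal {F : Filter I} {x : ∀ i, R i} :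
    x ∈ eventuallyZeroIdeal F ↔ ∀ᶠ i in F, x i = 0 := Iff.rfl

lemma isPrime_eventuallyZeroIdeal [∀ i, Nontrivial (R i)] [∀ i, NoZeroDivisors (R i)]
    (U : Ultrafilter I) : (eventuallyZeroIdeal (R := R) (U : Filter I)).IsPrime where
  ne_top' h := by
    obtain ⟨i, hi⟩ := ((Ideal.eq_top_iff_one _).1 h).exists
    exact one_ne_zero hi
  mem_or_mem' {x y} hxy := by
    simpa only [mem_eventuallyZeroIdeal, Pi.mul_apply, mul_eq_zero, Ultrafilter.eventually_or]
      using hxy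

end EventuallyZero

end Pi

namespace PrimeSpectrum

open Pi

variable {I : Type*}

section CommSemiring

variable {R : I → Type*} [∀ i, CommSemiring (R i)]

def toUltrafilter (p : PrimeSpectrum (∀ i, R i)) : Ultrafilter I :=
  Ultrafilter.ofComplNotMemIff
    { sets := {A | idempotentOfSet A ∉ p.asIdeal}
      univ_sets := by
        simpa [idempotentOfSet_univ] using (Ideal.ne_top_iff_one _).1 p.isPrime.ne_top
      sets_of_superset := fun {A B} hA hAB hB => hA <| by
        rw [← inter_eq_left.2 hAB, idempotentOfSet_inter]
        exact p.asIdeal.mul_mem_left _ hB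
      inter_sets := fun hA hB h => by
        rw [idempotentOfSet_inter] at h
        exact (p.isPrime.mem_or_mem h).elim hA hB }
    fun A => not_not.trans <| p.isPrime.mem_iff_notMem_of_mul_eq_zero_of_add_eq_one
      (idempotentOfSet_mul_compl A) (idempotentOfSet_add_compl A)

lemma mem_toUltrafilter {p : PrimeSpectrum (∀ i, R i)} {A : Set I} :
    A ∈ p.toUltrafilter ↔ idempotentOfSet A ∉ p.asIdeal := Iff.rfl

lemma continuous_toUltrafilter : Continuous (toUltrafilter (R := R)) := by
  refine ultrafilterBasis_is_basis.continuous_iff.2 ?_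
  rintro _ ⟨A, rfl⟩
  exact (basicOpen (idempotentOfSet A)).isOpen

lemma toUltrafilter_surjective [∀ i, Nontrivial (R i)] [∀ i, NoZeroDivisors (R i)] :
    Function.Surjective (toUltrafilter (R := R)) := fun U =>
  ⟨⟨eventuallyZeroIdeal U, isPrime_eventuallyZeroIdeal U⟩, Ultrafilter.ext fun A => by
    simp only [mem_toUltrafilter, mem_eventuallyZeroIdeal, idempotentOfSet_apply_eq_zero_iff]
    exact Ultrafilter.compl_notMem_iff⟩

end CommSemiring

section Field

variable (k : I → Type*) [∀ i, Field (k i)]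

lemma asIdeal_eq_eventuallyZeroIdeal_toUltrafilter (p : PrimeSpectrum (∀ i, k i)) :
    p.asIdeal = eventuallyZeroIdeal p.toUltrafilter := by
  ext x
  have hsupp : x * x⁻¹ = idempotentOfSet {i | x i ≠ 0} := by
    funext i
    by_cases hx : x i = 0 <;> simp [hx]
  have hx : x ∈ p.asIdeal ↔ x * x⁻¹ ∈ p.asIdeal :=
    ⟨p.asIdeal.mul_mem_right _, fun h => by
      rw [← funext fun i => mul_inv_mul_cancel (x i)]
      exact p.asIdeal.mul_mem_right x h⟩
  rw [hx, hsupp, mem_eventuallyZeroIdeal, ← not_iff_not, ← mem_toUltrafilter]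
  exact Ultrafilter.compl_mem_iff_notMem

lemma toUltrafilter_injective : Function.Injective (toUltrafilter (R := k)) := fun p q h =>
  PrimeSpectrum.ext <| by
    rw [asIdeal_eq_eventuallyZeroIdeal_toUltrafilter, h,
      ← asIdeal_eq_eventuallyZeroIdeal_toUltrafilter]

end Field

end PrimeSpectrum

/-- If `{k i}_{i ∈ I}` is a family of fields, then the Zariski prime spectrum of the
product ring `∏ i, k i` is homeomorphic to the Stone–Čech compactification of the
discrete space `I`, i.e. the space of ultrafilters on `I`. -/
theorem primeSpectrum_pi_field_homeomorph_ultrafilter {I : Type*} (k : I → Type*)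
    [∀ i, Field (k i)] :
    Nonempty (PrimeSpectrum (∀ i, k i) ≃ₜ Ultrafilter I) :=
  ⟨PrimeSpectrum.continuous_toUltrafilter.homeoOfEquivCompactToT2
    (f := .ofBijective _
      ⟨PrimeSpectrum.toUltrafilter_injective k, PrimeSpectrum.toUltrafilter_surjective⟩)⟩
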